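/- Fix ω > 0 and consider two boats i, j executing waveforms φ_i(t) = (φ₀)_i + A_i · cos(ωt) · cos((φ₀)_i) and φ_j(t) = (φ₀)_j + A_j · cos(ωt) · cos((φ₀)_j), where (φ₀)_i, (φ₀)_j ∈ {0, π} and 0 < A_i < π, 0 < A_j < π. Then for every time t, sin(φ_i(t)) · sin(φ_j(t)) ≥ 0; that is, the tails of the two boats always lie on the same (left/right) side of their respective body axes, regardless of each boat's choice of forward or reverse centerline. -/
import Mathlib

lemma sin_centerline (A c φ₀ : ℝ) (h : φ₀ = 0 ∨ φ₀ = Real.pi) :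
    Real.sin (φ₀ + A * c * Real.cos φ₀) = Real.sin (A * c) := by
  rcases h with h | h <;> subst h <;> simp [Real.sin_pi_sub, ← Real.sin_pi_sub (A*c), sub_eq_add_neg]


lemma sin_sign (A : ℝ) (hA : 0 < A) (hA' : A < Real.pi) (c : ℝ) (hc : -1 ≤ c) (hc' : c ≤ 1) :
    (0 ≤ c → 0 ≤ Real.sin (A * c)) ∧ (c ≤ 0 → Real.sin (A * c) ≤ 0) := by
  constructor
  · intro h
    apply Real.sin_nonneg_of_nonneg_of_le_pi (by positivity)
    nlinarith
  · intro h
    have : 0 ≤ Real.sin (A * (-c)) := by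
      apply Real.sin_nonneg_of_nonneg_of_le_pi (by nlinarith)
      nlinarith
    have : Real.sin (A * (-c)) = -Real.sin (A * c) := by
      rw [show A * (-c) = -(A * c) by ring, Real.sin_neg]
    linarith [Real.sin_nonneg_of_nonneg_of_le_pi (by nlinarith : (0:ℝ) ≤ A * (-c)) (by nlinarith : A * (-c) ≤ Real.pi)]

theorem tails_same_side {ω : ℝ} (hω : 0 < ω)
    (Ai Aj φ₀i φ₀j : ℝ)
    (hAi : 0 < Ai) (hAi' : Ai < Real.pi)
    (hAj : 0 < Aj) (hAj' : Aj < Real.pi)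
    (hφ₀i : φ₀i = 0 ∨ φ₀i = Real.pi)
    (hφ₀j : φ₀j = 0 ∨ φ₀j = Real.pi)
    (φi φj : ℝ → ℝ)
    (hφi : ∀ t, φi t = φ₀i + Ai * Real.cos (ω * t) * Real.cos φ₀i)
    (hφj : ∀ t, φj t = φ₀j + Aj * Real.cos (ω * t) * Real.cos φ₀j) :
    ∀ t, 0 ≤ Real.sin (φi t) * Real.sin (φj t) := by
  intro t
  set c := Real.cos (ω * t) with hc
  have hc1 := Real.neg_one_le_cos (ω * t)
  have hc2 := Real.cos_le_one (ω * t)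
  rw [hφi t, hφj t, sin_centerline _ _ _ hφ₀i, sin_centerline _ _ _ hφ₀j]
  obtain ⟨hi1, hi2⟩ := sin_sign Ai hAi hAi' c hc1 hc2
  obtain ⟨hj1, hj2⟩ := sin_sign Aj hAj hAj' c hc1 hc2
  rcases le_total 0 c with h | h
  · exact mul_nonneg (hi1 h) (hj1 h)
  · have := mul_nonneg (neg_nonneg.2 (hi2 h)) (neg_nonneg.2 (hj2 h)); linarith [this]
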